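/- Let n ≥ 2 and 2 ≤ k ≤ n. There exists a constant c = c(n,k) > 0, depending only on n and k, such that for every λ ∈ Γ_k with λ_1 ≥ λ_2 ≥ … ≥ λ_n and λ_n < 0, one has σ_{k-1;n}(λ) ≥ c·|λ_n|^{k-1}. -/
import Mathlib

noncomputable section

/-- The j-th elementary symmetric polynomial of a vector in ℝⁿ. -/
def elemSym (n j : ℕ) (l : Fin n → ℝ) : ℝ :=
  ∑ s ∈ (Finset.univ : Finset (Fin n)).powersetCard j, ∏ i ∈ s, l i

/-- The Gårding cone Γ_k ⊂ ℝⁿ. -/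
def GardingCone (n k : ℕ) : Set (Fin n → ℝ) :=
  {l | ∀ j, 1 ≤ j → j ≤ k → 0 < elemSym n j l}

lemma elemSym_zero (n : ℕ) (l : Fin n → ℝ) : elemSym n 0 l = 1 := by
  simp [elemSym]

lemma elemSym_update_eq (n j : ℕ) (l : Fin n → ℝ) (i : Fin n) :
    elemSym n j (Function.update l i 0) =
      ∑ s ∈ ((Finset.univ : Finset (Fin n)).powersetCard j).filter (fun s => i ∉ s),
        ∏ x ∈ s, l x := by
  classical
  rw [elemSym, ← Finset.sum_filter_add_sum_filter_not _ (fun s => i ∉ s)]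
  have h0 : ∑ s ∈ ((Finset.univ : Finset (Fin n)).powersetCard j).filter (fun s => ¬ i ∉ s),
      ∏ x ∈ s, Function.update l i 0 x = 0 := by
    apply Finset.sum_eq_zero
    intro s hs
    simp only [Finset.mem_filter, not_not] at hs
    exact Finset.prod_eq_zero hs.2 (by simp)
  rw [h0, add_zero]
  apply Finset.sum_congr rfl
  intro s hs
  simp only [Finset.mem_filter] at hs
  exact Finset.prod_congr rfl
    (fun x hx => Function.update_of_ne (by rintro rfl; exact hs.2 hx) _ _)

lemma elemSym_split (n j : ℕ) (hj : 1 ≤ j) (l : Fin n → ℝ) (i : Fin n) :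
    elemSym n j l =
      elemSym n j (Function.update l i 0)
        + l i * elemSym n (j - 1) (Function.update l i 0) := by
  classical
  rw [elemSym_update_eq, elemSym_update_eq, elemSym,
    ← Finset.sum_filter_add_sum_filter_not ((Finset.univ : Finset (Fin n)).powersetCard j)
      (fun s => i ∉ s)]
  congr 1
  rw [Finset.mul_sum]
  apply Finset.sum_nbij' (fun s => s.erase i) (fun s => insert i s)
  · intro s hs
    simp only [Finset.mem_filter, Finset.mem_powersetCard_univ, not_not] at hs ⊢
    constructor
    · rw [Finset.card_erase_of_mem hs.2, hs.1]
    · simp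
  · intro s hs
    simp only [Finset.mem_filter, Finset.mem_powersetCard_univ, not_not] at hs ⊢
    constructor
    · rw [Finset.card_insert_of_notMem hs.2, hs.1]; omega
    · exact Finset.mem_insert_self i s
  · intro s hs
    simp only [Finset.mem_filter, Finset.mem_powersetCard_univ, not_not] at hs
    exact Finset.insert_erase hs.2
  · intro s hs
    simp only [Finset.mem_filter, Finset.mem_powersetCard_univ] at hs
    exact Finset.erase_insert hs.2
  · intro s hs
    simp only [Finset.mem_filter, Finset.mem_powersetCard_univ, not_not] at hs
    exact (Finset.mul_prod_erase s l hs.2).symm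

/-- there is c = c(n,k) > 0 such that every decreasing λ ∈ Γ_k with λ_n < 0
satisfies σ_{k-1;n}(λ) ≥ c·|λ_n|^{k-1}. -/
theorem exists_const_elemSym_update_last (n k : ℕ) (hn : 2 ≤ n) (hk : 2 ≤ k) (hkn : k ≤ n) :
    ∃ c : ℝ, 0 < c ∧ ∀ l : Fin n → ℝ, l ∈ GardingCone n k →
      (∀ i j : Fin n, i ≤ j → l j ≤ l i) →
      l ⟨n - 1, by omega⟩ < 0 →
      c * |l ⟨n - 1, by omega⟩| ^ (k - 1)
        ≤ elemSym n (k - 1) (Function.update l ⟨n - 1, by omega⟩ 0) := by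
  refine ⟨1, one_pos, ?_⟩
  intro l hl _ hneg
  set N : Fin n := ⟨n - 1, by omega⟩ with hN
  set a : ℝ := -(l N) with ha
  have hapos : 0 < a := by simp [ha]; exact hneg
  have key : ∀ j, j ≤ k → a ^ j ≤ elemSym n j (Function.update l N 0) := by
    intro j
    induction j with
    | zero => intro _; simp [elemSym_zero]
    | succ m ih =>
      intro hmk
      have h1 := hl (m + 1) (by omega) hmk
      have hs := elemSym_split n (m + 1) (by omega) l N
      have ih' := ih (by omega)
      simp only [Nat.add_sub_cancel] at hs
      have hln : l N = -a := by rw [ha]; ring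
      rw [hln] at hs
      rw [pow_succ]
      nlinarith [mul_le_mul_of_nonneg_left ih' hapos.le]
  have hk1 := key (k - 1) (by omega)
  have habs : |l N| = a := by rw [abs_of_neg hneg, ha]
  rw [one_mul, habs]
  exact hk1
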